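/- arXiv:1404.5679 — 3 statements merged into one kernel-verified Lean document; each statement's English description precedes it below -/
import Mathlib

section
/- For integers a, b and natural numbers s ≤ t, define the Gaussian binomial [[N, t]] = ∏_{i=1}^{t} (v^{2(N-i+1)} - 1)/(v^{2i} - 1) and its symmetric version [N, t] = v^{-t(N-t)} [[N, t]], elements of ℤ[v, v^{-1}]. Then for all integers a, b and all natural numbers t, the Vandermonde-type identity holds: [a+b, t] = ∑_{s=0}^{t} v^{a(t-s) - s·b} · [a, s] · [b, t-s]. -/
/-!
Both sides obey the same recursion in `b`. With `q = v²`, Pascal's rule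
`[[N+1, t+1]] = [[N, t+1]] + q^(N-t) [[N, t]]` becomes
`[N+1, t+1] = v^(-(t+1)) [N, t+1] + v^(N-t) [N, t]` for the symmetric binomials, and applying it
to each `[b+1, t+1-s]` shows that the right-hand side satisfies the same rule in `(a + b, t)`.
Inducting on `t`, the identity for `t + 1` therefore holds at `b + 1` iff it holds at `b`, so it
propagates in both directions from `b = 0`, where `[0, u] = 0` for `u > 0` leaves only the term
`s = t`.
-/

/-- The indeterminate `v`, viewed in the field of rational functions `ℚ(v)`. -/
noncomputable def v : RatFunc ℚ := RatFunc.X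

/-- The Gaussian binomial `[[N, t]] = ∏_{i=1}^{t} (v^{2(N-i+1)} - 1)/(v^{2i} - 1)`. -/
noncomputable def dblBrack (N : ℤ) (t : ℕ) : RatFunc ℚ :=
  ∏ i ∈ Finset.range t, (v ^ (2 * (N - (i : ℤ))) - 1) / (v ^ (2 * ((i : ℤ) + 1)) - 1)

/-- The symmetric Gaussian binomial `[N, t] = v^{-t(N-t)} [[N, t]]`. -/
noncomputable def symBrack (N : ℤ) (t : ℕ) : RatFunc ℚ :=
  v ^ (-(t : ℤ) * (N - (t : ℤ))) * dblBrack N t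

lemma v_ne_zero : v ≠ 0 := RatFunc.X_ne_zero

lemma v_pow_ne_one {n : ℕ} (hn : n ≠ 0) : v ^ n ≠ 1 := by
  rw [v, ← RatFunc.algebraMap_X, ← map_pow, ← map_one (algebraMap (Polynomial ℚ) (RatFunc ℚ)),
    Ne, (RatFunc.algebraMap_injective ℚ).eq_iff]
  intro h
  simpa [hn] using congrArg Polynomial.natDegree h

lemma v_zpow_two_mul_succ_sub_one_ne_zero (t : ℕ) : v ^ (2 * ((t : ℤ) + 1)) - 1 ≠ 0 := by
  rw [sub_ne_zero, show 2 * ((t : ℤ) + 1) = ((2 * (t + 1) : ℕ) : ℤ) by push_cast; ring,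
    zpow_natCast]
  exact v_pow_ne_one (by omega)

lemma dblBrack_zero (N : ℤ) : dblBrack N 0 = 1 := Finset.prod_range_zero _

lemma dblBrack_succ (N : ℤ) (t : ℕ) :
    dblBrack N (t + 1) =
      dblBrack N t * ((v ^ (2 * (N - t)) - 1) / (v ^ (2 * ((t : ℤ) + 1)) - 1)) :=
  Finset.prod_range_succ _ t

lemma dblBrack_zero_left {t : ℕ} (ht : t ≠ 0) : dblBrack 0 t = 0 :=
  Finset.prod_eq_zero (Finset.mem_range.2 (Nat.pos_of_ne_zero ht)) (by simp)

lemma dblBrack_mul_succ_eq (N : ℤ) (t : ℕ) :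
    dblBrack N t * (v ^ (2 * (N + 1)) - 1) =
      dblBrack (N + 1) t * (v ^ (2 * (N + 1 - t)) - 1) := by
  induction t with
  | zero => simp [dblBrack_zero]
  | succ t ih =>
    have hden := v_zpow_two_mul_succ_sub_one_ne_zero t
    rw [dblBrack_succ, dblBrack_succ,
      show 2 * (N + 1 - ((t + 1 : ℕ) : ℤ)) = 2 * (N - t) by push_cast; ring]
    field_simp
    linear_combination (v ^ (2 * (N - t)) - 1) * ih

lemma dblBrack_succ_succ (N : ℤ) (t : ℕ) :
    dblBrack (N + 1) (t + 1) = dblBrack N (t + 1) + v ^ (2 * (N - t)) * dblBrack N t := by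
  have hden := v_zpow_two_mul_succ_sub_one_ne_zero t
  have hsplit : v ^ (2 * (N + 1)) = v ^ (2 * (N - t)) * v ^ (2 * ((t : ℤ) + 1)) := by
    rw [← zpow_add₀ v_ne_zero]; ring_nf
  rw [dblBrack_succ, dblBrack_succ]
  field_simp
  linear_combination dblBrack N t * hsplit - dblBrack_mul_succ_eq N t

lemma symBrack_zero (N : ℤ) : symBrack N 0 = 1 := by
  simp [symBrack, dblBrack_zero]

lemma symBrack_zero_left {t : ℕ} (ht : t ≠ 0) : symBrack 0 t = 0 := by
  rw [symBrack, dblBrack_zero_left ht, mul_zero]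

lemma symBrack_succ_succ (N : ℤ) (t : ℕ) :
    symBrack (N + 1) (t + 1) =
      v ^ (-((t : ℤ) + 1)) * symBrack N (t + 1) + v ^ (N - t) * symBrack N t := by
  simp only [symBrack, dblBrack_succ_succ, mul_add, ← mul_assoc, ← zpow_add₀ v_ne_zero]
  congr 3 <;> push_cast <;> ring

noncomputable def vandermondeTerm (a b : ℤ) (t s : ℕ) : RatFunc ℚ :=
  v ^ (a * ((t : ℤ) - (s : ℤ)) - (s : ℤ) * b) * symBrack a s * symBrack b (t - s)

noncomputable def vandermondeSum (a b : ℤ) (t : ℕ) : RatFunc ℚ :=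
  ∑ s ∈ Finset.range (t + 1), vandermondeTerm a b t s

lemma vandermondeTerm_succ_succ (a b : ℤ) {s t : ℕ} (hs : s ≤ t) :
    vandermondeTerm a (b + 1) (t + 1) s =
      v ^ (-((t : ℤ) + 1)) * vandermondeTerm a b (t + 1) s +
        v ^ (a + b - t) * vandermondeTerm a b t s := by
  obtain ⟨u, rfl⟩ := Nat.exists_eq_add_of_le hs
  rw [vandermondeTerm, vandermondeTerm, vandermondeTerm, show s + u + 1 - s = u + 1 by omega,
    Nat.add_sub_cancel_left, symBrack_succ_succ]
  simp only [mul_add, add_mul, ← mul_assoc, mul_right_comm _ (symBrack a s),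
    ← zpow_add₀ v_ne_zero]
  congr 4 <;> push_cast <;> ring

lemma vandermondeTerm_succ_self (a b : ℤ) (t : ℕ) :
    vandermondeTerm a (b + 1) t t = v ^ (-(t : ℤ)) * vandermondeTerm a b t t := by
  simp only [vandermondeTerm, Nat.sub_self, symBrack_zero, mul_one, ← mul_assoc,
    ← zpow_add₀ v_ne_zero]
  congr 2; ring

lemma vandermondeSum_succ_succ (a b : ℤ) (t : ℕ) :
    vandermondeSum a (b + 1) (t + 1) =
      v ^ (-((t : ℤ) + 1)) * vandermondeSum a b (t + 1) +
        v ^ (a + b - t) * vandermondeSum a b t := by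
  rw [vandermondeSum, vandermondeSum, vandermondeSum, Finset.sum_range_succ,
    Finset.sum_range_succ _ (t + 1),
    Finset.sum_congr rfl fun s hs ↦ vandermondeTerm_succ_succ a b (Finset.mem_range_succ_iff.1 hs),
    Finset.sum_add_distrib, vandermondeTerm_succ_self, ← Finset.mul_sum, ← Finset.mul_sum]
  push_cast
  ring

lemma vandermondeSum_zero_right (a : ℤ) (t : ℕ) : vandermondeSum a 0 t = symBrack a t := by
  rw [vandermondeSum, Finset.sum_range_succ, Finset.sum_eq_zero, zero_add]
  · simp [vandermondeTerm, symBrack_zero]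
  · intro s hs
    rw [vandermondeTerm, symBrack_zero_left (by simpa [Nat.sub_eq_zero_iff_le] using hs),
      mul_zero]

/-- Vandermonde-type identity:
`[a+b, t] = ∑_{s=0}^{t} v^{a(t-s) - s·b} · [a, s] · [b, t-s]`. -/
theorem symBrack_add (a b : ℤ) (t : ℕ) :
    symBrack (a + b) t =
      ∑ s ∈ Finset.range (t + 1),
        v ^ (a * ((t : ℤ) - (s : ℤ)) - (s : ℤ) * b) * symBrack a s * symBrack b (t - s) := by
  change symBrack (a + b) t = vandermondeSum a b t
  induction t generalizing b with
  | zero => simp [vandermondeSum, vandermondeTerm, symBrack_zero]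
  | succ t ih =>
    have iff_succ (b : ℤ) : symBrack (a + b) (t + 1) = vandermondeSum a b (t + 1) ↔
        symBrack (a + (b + 1)) (t + 1) = vandermondeSum a (b + 1) (t + 1) := by
      rw [← add_assoc, symBrack_succ_succ, vandermondeSum_succ_succ, ih, add_left_inj,
        mul_right_inj' (zpow_ne_zero _ v_ne_zero)]
    induction b using Int.induction_on with
    | zero => rw [add_zero, vandermondeSum_zero_right]
    | succ b hb => exact (iff_succ b).1 hb
    | pred b hb => exact (iff_succ (-b - 1)).2 (by rwa [sub_add_cancel])
end

section
/- Let n ≥ 2 and let A ∈ Θ±(n) be an n-periodic ℤ×ℤ matrix with natural-number entries, zero diagonal, and finitely many nonzero entries in each row and column modulo periodicity. Define ‖A‖ = ∑_{i<j, 1≤i≤n} C(j−i+1, 2)·(a_{i,j} + a_{j,i}). If B ∈ Θ±(n) satisfies σ_{i,j}(B) ≤ σ_{i,j}(A) for all i ≠ j with strict inequality for at least one pair (i.e. B ≺ A), then ‖B‖ < ‖A‖. -/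
/-- The set `Θ±(n)` of `ℤ×ℤ` matrices over `ℕ`, `n`-periodic along the diagonal, with
zero diagonal and finitely many nonzero entries in each row and column modulo
periodicity. -/
def ThetaPM (n : ℕ) : Set (ℤ → ℤ → ℕ) :=
  {A | (∀ i j : ℤ, A (i + n) (j + n) = A i j) ∧
       (∀ i : ℤ, A i i = 0) ∧
       (∀ i : ℤ, {j : ℤ | A i j ≠ 0}.Finite ∧ {j : ℤ | A j i ≠ 0}.Finite)}

/-- `σ_{i,j}(A) = ∑_{s ≤ i, t ≥ j} a_{s,t}` if `i < j`, and
`σ_{i,j}(A) = ∑_{s ≥ i, t ≤ j} a_{s,t}` if `i > j`. -/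
noncomputable def sigmaijN (A : ℤ → ℤ → ℕ) (i j : ℤ) : ℕ :=
  if i < j then ∑ᶠ p ∈ {p : ℤ × ℤ | p.1 ≤ i ∧ j ≤ p.2}, A p.1 p.2
  else ∑ᶠ p ∈ {p : ℤ × ℤ | i ≤ p.1 ∧ p.2 ≤ j}, A p.1 p.2

/-- `‖A‖ = ∑_{1 ≤ i ≤ n, i < j} C(j−i+1, 2)·(a_{i,j} + a_{j,i})`. -/
noncomputable def normA (n : ℕ) (A : ℤ → ℤ → ℕ) : ℕ :=
  ∑ᶠ p ∈ {p : ℤ × ℤ | 1 ≤ p.1 ∧ p.1 ≤ (n : ℤ) ∧ p.1 < p.2},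
    ((p.2 - p.1 + 1).toNat.choose 2) * (A p.1 p.2 + A p.2 p.1)

/-- The strict relation `B ≺ A`: `σ_{i,j}(B) ≤ σ_{i,j}(A)` for all `i ≠ j`, with
strict inequality for at least one pair. -/
def precRel (B A : ℤ → ℤ → ℕ) : Prop :=
  (∀ i j : ℤ, i ≠ j → sigmaijN B i j ≤ sigmaijN A i j) ∧
  ∃ i j : ℤ, i ≠ j ∧ sigmaijN B i j < sigmaijN A i j

/-!
Everything rests on the identity `‖A‖ = ∑_{1 ≤ i ≤ n} ∑_{j ≠ i} σ_{i,j}(A)`: with it, `B ≺ A`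
compares the two norms termwise, and since `σ` is invariant under the shift
`(i, j) ↦ (i + n, j + n)`, the strict pair can be moved into the window `1 ≤ i ≤ n`.

For the identity, finiteness of the rows and periodicity make `A` banded, so all sums are finite.
An entry `a_{s,s+d}` lies in the corner `σ_{i,j}` with `i < j` iff `s ≤ i < j ≤ s + d`; writing
`s = i - e`, there are `d - e` such `j`, and since the diagonal `s ↦ a_{s,s+d}` is `n`-periodic,
summing over `i` in a period and over `e` counts each diagonal entry `∑_{e < d} (d - e) = C(d+1, 2)`
times. Transposition exchanges the corners below the diagonal with those above it.
-/

open Finset Function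

theorem Function.Periodic.sum_range_add {β : Type*} [AddCancelCommMonoid β] {f : ℤ → β} {n : ℕ}
    (hf : Periodic f n) (a b : ℤ) :
    ∑ i ∈ range n, f (i + a) = ∑ i ∈ range n, f (i + b) := by
  set W : ℤ → β := fun a => ∑ i ∈ range n, f (i + a)
  have step (a : ℤ) : W (a + 1) = W a := by
    have h := sum_range_succ' (fun i : ℕ => f (i + a)) n
    rw [sum_range_succ, Nat.cast_zero, zero_add, add_comm (n : ℤ), hf a] at h
    simpa [W, add_assoc, add_comm (1 : ℤ)] using h.symm
  have hW (a : ℤ) : W a = W 0 := by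
    induction a using Int.induction_on with
    | zero => rfl
    | succ a ih => rw [step, ih]
    | pred a ih => rw [← ih, ← step, sub_add_cancel]
  exact (hW a).trans (hW b).symm

theorem sum_range_tsub_eq_choose_two {d D : ℕ} (hd : d ≤ D) :
    ∑ e ∈ range (D + 1), (d - e) = (d + 1).choose 2 := by
  induction D, hd using Nat.le_induction with
  | base =>
    rw [← sum_range_reflect, Nat.choose_two_right, ← sum_range_id]
    exact sum_congr rfl fun e he => by simp at he; omega
  | succ D hD ih => rw [sum_range_succ, ih, Nat.sub_eq_zero_of_le (by omega), add_zero]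

theorem sum_Icc_erase_zero {β : Type*} [AddCommMonoid β] (g : ℤ → β) (D : ℕ) :
    ∑ j ∈ (Icc (-D : ℤ) D).erase 0, g j = ∑ k ∈ range D, (g (k + 1) + g (-(k + 1))) := by
  induction D with
  | zero => simp
  | succ D ih =>
    have hsplit : (Icc (-(D + 1 : ℕ) : ℤ) (D + 1 : ℕ)).erase 0 =
        insert ((D : ℤ) + 1) (insert (-((D : ℤ) + 1)) ((Icc (-D : ℤ) D).erase 0)) := by
      ext j; simp only [mem_erase, mem_Icc, mem_insert]; omega
    rw [hsplit, sum_insert (by simp; omega), sum_insert (by simp), ih, sum_range_succ]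
    abel

def IsBanded (M : ℤ → ℤ → ℕ) (D : ℕ) : Prop :=
  ∀ s t, M s t ≠ 0 → (t - s).natAbs ≤ D

/-- The half `∑_{1 ≤ i ≤ n, i < j} C(j - i + 1, 2) a_{i,j}` of `‖M‖` for `M` banded of width `D`,
indexed by `d = j - i` (the term `d = 0` vanishes). -/
def upperNorm (n D : ℕ) (M : ℤ → ℤ → ℕ) : ℕ :=
  ∑ d ∈ range (D + 1), (d + 1).choose 2 * ∑ i ∈ range n, M (i + 1) (i + 1 + d)

section
variable {n D : ℕ} {M : ℤ → ℤ → ℕ}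

theorem IsBanded.mono {D' : ℕ} (hM : IsBanded M D) (h : D ≤ D') : IsBanded M D' :=
  fun s t hst => (hM s t hst).trans h

theorem IsBanded.swap (hM : IsBanded M D) : IsBanded (swap M) D :=
  fun s t hst => by have := hM t s hst; omega

theorem periodic_diag (hper : ∀ i j, M (i + n) (j + n) = M i j) (d : ℤ) :
    Periodic (fun x => M x (x + d)) n := fun x => by
  simpa only [add_right_comm x] using hper x (x + d)

theorem exists_isBanded (hn : 0 < n) (hper : ∀ i j, M (i + n) (j + n) = M i j)
    (hrow : ∀ i, {j | M i j ≠ 0}.Finite) : ∃ D, IsBanded M D := by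
  have hfin : (⋃ s ∈ Set.Icc (1 : ℤ) n, (fun t => (t - s).natAbs) '' {t | M s t ≠ 0}).Finite :=
    (Set.finite_Icc _ _).biUnion fun s _ => (hrow s).image _
  obtain ⟨D, hD⟩ := hfin.bddAbove
  refine ⟨D, fun s t hst => ?_⟩
  obtain ⟨y, ⟨hy₁, hy₂⟩, hsy⟩ :=
    (periodic_diag hper (t - s)).exists_mem_Ico (by exact_mod_cast hn) s 1
  simp only [add_sub_cancel] at hsy
  refine hD (Set.mem_biUnion (x := y) ⟨hy₁, by omega⟩ ⟨y + (t - s), ?_, by simp⟩)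
  rwa [Set.mem_ofPred_eq, ← hsy]

theorem sigmaijN_add_period (hper : ∀ i j, M (i + n) (j + n) = M i j) (i j : ℤ) :
    sigmaijN M (i + n) (j + n) = sigmaijN M i j := by
  have htranslate (S : Set (ℤ × ℤ)) :
      ∑ᶠ p ∈ (· + ((n : ℤ), (n : ℤ))) '' S, M p.1 p.2 = ∑ᶠ p ∈ S, M p.1 p.2 := by
    rw [finsum_mem_image (add_left_injective _).injOn]
    simp [hper]
  unfold sigmaijN
  simp only [add_lt_add_iff_right]
  split_ifs <;>
  · refine (finsum_mem_congr ?_ fun _ _ => rfl).trans (htranslate _)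
    ext ⟨a, b⟩
    simp [Set.image_add_right]

theorem periodic_sigmaijN (hper : ∀ i j, M (i + n) (j + n) = M i j) (d : ℤ) :
    Periodic (fun x => sigmaijN M x (x + d)) n := fun x => by
  simpa only [add_right_comm x] using sigmaijN_add_period hper x (x + d)

theorem sigmaijN_swap {i j : ℤ} (hij : j < i) : sigmaijN M i j = sigmaijN (swap M) j i := by
  rw [sigmaijN, sigmaijN, if_neg hij.not_gt, if_pos hij]
  exact finsum_mem_eq_of_bijOn Prod.swap ⟨fun p hp => hp.symm, Prod.swap_injective.injOn,
    fun p hp => ⟨p.swap, hp.symm, rfl⟩⟩ fun _ _ => rfl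

theorem sigmaijN_eq_zero_of_isBanded (hM : IsBanded M D) {i j : ℤ} (h : D < (j - i).natAbs) :
    sigmaijN M i j = 0 := by
  unfold sigmaijN
  split_ifs <;>
  · refine finsum_mem_eq_zero_of_forall_eq_zero fun p hp => ?_
    by_contra hne
    have := hM _ _ hne
    simp only [Set.mem_ofPred_eq] at hp
    omega

theorem sigmaijN_add_succ_eq_sum (hM : IsBanded M D) (x : ℤ) (k : ℕ) :
    sigmaijN M x (x + (k + 1)) = ∑ e ∈ range (D + 1), ∑ d ∈ range (D + 1),
      if k + 1 + e ≤ d then M (x - e) (x - e + d) else 0 := by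
  set φ : ℕ × ℕ → ℤ × ℤ := fun q => (x - q.1, x - q.1 + q.2)
  set Q := (range (D + 1) ×ˢ range (D + 1)).filter fun q => k + 1 + q.1 ≤ q.2
  rw [sigmaijN, if_pos (by omega)]
  calc ∑ᶠ p ∈ {p : ℤ × ℤ | p.1 ≤ x ∧ x + (k + 1) ≤ p.2}, M p.1 p.2
      = ∑ p ∈ Q.image φ, M p.1 p.2 := by
        refine finsum_mem_eq_sum_of_subset _ ?_ ?_
        · rintro ⟨s, t⟩ ⟨⟨hs, ht⟩, hne⟩
          have := hM s t hne
          simp only [Q, φ, coe_image, coe_filter, mem_product, mem_range, Set.mem_image,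
            Set.mem_ofPred_eq, Prod.exists, Prod.mk.injEq]
          exact ⟨(x - s).toNat, (t - s).toNat, by omega, by omega, by omega⟩
        · simp only [Q, φ, coe_image, coe_filter, Set.image_subset_iff]
          intro q hq
          simp only [Set.mem_ofPred_eq, mem_product, mem_range] at hq
          simp only [Set.mem_preimage, Set.mem_ofPred_eq]
          omega
    _ = ∑ q ∈ Q, M (x - q.1) (x - q.1 + q.2) :=
        sum_image fun q _ q' _ h => by
          simp only [φ, Prod.mk.injEq] at h
          ext <;> omega
    _ = _ := by rw [sum_filter, sum_product]

theorem sum_range_sigmaijN_add_succ (hM : IsBanded M D) (x : ℤ) :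
    ∑ k ∈ range D, sigmaijN M x (x + (k + 1)) =
      ∑ e ∈ range (D + 1), ∑ d ∈ range (D + 1), (d - e) * M (x - e) (x - e + d) := by
  simp_rw [sigmaijN_add_succ_eq_sum hM]
  rw [sum_comm]
  refine sum_congr rfl fun e _ => ?_
  rw [sum_comm]
  refine sum_congr rfl fun d hd => ?_
  have hcount : (range D).filter (fun k => k + 1 + e ≤ d) = range (d - e) := by
    ext k; simp only [mem_filter, mem_range] at hd ⊢; omega
  rw [← sum_filter, sum_const, hcount, card_range, smul_eq_mul]

theorem sum_sigmaijN_above_eq_upperNorm (hper : ∀ i j, M (i + n) (j + n) = M i j)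
    (hM : IsBanded M D) :
    ∑ i ∈ range n, ∑ k ∈ range D, sigmaijN M (i + 1) (i + 1 + (k + 1)) = upperNorm n D M := by
  have hwindow (e d : ℕ) : ∑ i ∈ range n, M (i + 1 - e) (i + 1 - e + d) =
      ∑ i ∈ range n, M (i + 1) (i + 1 + d) := by
    simpa only [add_sub_assoc] using (periodic_diag hper d).sum_range_add (1 - e) 1
  calc ∑ i ∈ range n, ∑ k ∈ range D, sigmaijN M (i + 1) (i + 1 + (k + 1))
      = ∑ e ∈ range (D + 1), ∑ d ∈ range (D + 1),
          (d - e) * ∑ i ∈ range n, M (i + 1 - e) (i + 1 - e + d) := by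
        simp_rw [sum_range_sigmaijN_add_succ hM, mul_sum]
        rw [sum_comm]
        exact sum_congr rfl fun _ _ => sum_comm
    _ = ∑ d ∈ range (D + 1), (∑ e ∈ range (D + 1), (d - e)) *
          ∑ i ∈ range n, M (i + 1) (i + 1 + d) := by
        simp_rw [hwindow, sum_mul]
        exact sum_comm
    _ = upperNorm n D M := sum_congr rfl fun d hd => by
        rw [sum_range_tsub_eq_choose_two (Nat.lt_succ_iff.mp (mem_range.mp hd))]

theorem sum_sigmaijN_below_eq_upperNorm_swap (hper : ∀ i j, M (i + n) (j + n) = M i j)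
    (hM : IsBanded M D) :
    ∑ i ∈ range n, ∑ k ∈ range D, sigmaijN M (i + 1) (i + 1 - (k + 1)) =
      upperNorm n D (swap M) := by
  have hper' : ∀ i j, swap M (i + n) (j + n) = swap M i j := fun i j => hper j i
  have hwindow (k : ℕ) : ∑ i ∈ range n, sigmaijN (swap M) (i + 1 - (k + 1)) (i + 1) =
      ∑ i ∈ range n, sigmaijN (swap M) (i + 1) (i + 1 + (k + 1)) := by
    simpa only [add_sub_assoc, add_assoc, sub_add_cancel] using
      (periodic_sigmaijN hper' (k + 1)).sum_range_add (1 - (k + 1)) 1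
  rw [← sum_sigmaijN_above_eq_upperNorm hper' hM.swap, sum_comm, sum_comm (s := range n)]
  refine sum_congr rfl fun k _ => ?_
  rw [← hwindow]
  exact sum_congr rfl fun i _ => sigmaijN_swap (by omega)

theorem normA_eq_upperNorm_add (hM : IsBanded M D) :
    normA n M = upperNorm n D M + upperNorm n D (swap M) := by
  set ψ : ℕ × ℕ → ℤ × ℤ := fun q => (q.1 + 1, q.1 + 1 + q.2)
  set f : ℤ × ℤ → ℕ := fun p => (p.2 - p.1 + 1).toNat.choose 2 * (M p.1 p.2 + M p.2 p.1)
  calc normA n M = ∑ p ∈ (range n ×ˢ range (D + 1)).image ψ, f p := by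
        refine finsum_mem_eq_sum_of_inter_support_eq _ ?_
        ext ⟨s, t⟩
        simp only [Set.mem_inter_iff, mem_support, Set.mem_ofPred_eq, coe_image, coe_product,
          Set.mem_image, Set.mem_prod, mem_coe, mem_range, Prod.exists, Prod.mk.injEq, ψ]
        refine and_congr_left fun hf => ?_
        obtain ⟨hchoose, hsum⟩ := mul_ne_zero_iff.mp hf
        have hst : s < t := by
          by_contra! h
          exact hchoose (Nat.choose_eq_zero_of_lt (by omega))
        have hband : (t - s).natAbs ≤ D := by
          by_cases hM0 : M s t = 0
          · have := hM t s (by simpa [hM0] using hsum); omega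
          · exact hM s t hM0
        constructor
        · rintro ⟨h1, hn, -⟩
          exact ⟨(s - 1).toNat, (t - s).toNat, ⟨by omega, by omega⟩, by omega, by omega⟩
        · rintro ⟨i, d, ⟨hi, -⟩, rfl, rfl⟩
          omega
    _ = ∑ i ∈ range n, ∑ d ∈ range (D + 1),
          (d + 1).choose 2 * (M (i + 1) (i + 1 + d) + M (i + 1 + d) (i + 1)) := by
        rw [sum_image fun q _ q' _ h => by simp only [ψ, Prod.mk.injEq] at h; ext <;> omega,
          sum_product]
        refine sum_congr rfl fun i _ => sum_congr rfl fun d _ => ?_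
        simp only [f, ψ, show ((i : ℤ) + 1 + d - (i + 1) + 1).toNat = d + 1 by omega]
    _ = upperNorm n D M + upperNorm n D (swap M) := by
        simp_rw [upperNorm, mul_add, sum_add_distrib, mul_sum, swap]
        rw [sum_comm, sum_comm (s := range n)]

theorem normA_eq_sum_sigmaijN (hper : ∀ i j, M (i + n) (j + n) = M i j) (hM : IsBanded M D) :
    normA n M = ∑ i ∈ range n, ∑ j ∈ (Icc (-D : ℤ) D).erase 0, sigmaijN M (i + 1) (i + 1 + j) := by
  rw [normA_eq_upperNorm_add hM, ← sum_sigmaijN_above_eq_upperNorm hper hM,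
    ← sum_sigmaijN_below_eq_upperNorm_swap hper hM, ← sum_add_distrib]
  refine sum_congr rfl fun i _ => ?_
  rw [sum_Icc_erase_zero, sum_add_distrib]
  simp only [sub_eq_add_neg]

theorem exists_sigmaijN_lt_of_precRel (hn : 0 < n) {A B : ℤ → ℤ → ℕ}
    (hperA : ∀ i j, A (i + n) (j + n) = A i j) (hperB : ∀ i j, B (i + n) (j + n) = B i j)
    (hA : IsBanded A D) (h : precRel B A) :
    ∃ i ∈ range n, ∃ j ∈ (Icc (-D : ℤ) D).erase 0,
      sigmaijN B (i + 1) (i + 1 + j) < sigmaijN A (i + 1) (i + 1 + j) := by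
  obtain ⟨i₀, j₀, hne, hlt⟩ := h.2
  have hper : Periodic (fun x => (sigmaijN B x (x + (j₀ - i₀)), sigmaijN A x (x + (j₀ - i₀)))) n :=
    fun x => Prod.ext (periodic_sigmaijN hperB _ x) (periodic_sigmaijN hperA _ x)
  obtain ⟨y, ⟨hy₁, hy₂⟩, hy⟩ := hper.exists_mem_Ico (by exact_mod_cast hn) i₀ 1
  simp only [add_sub_cancel, Prod.mk.injEq] at hy
  rw [hy.1, hy.2] at hlt
  have hband : (j₀ - i₀).natAbs ≤ D := by
    by_contra! hfar
    have := sigmaijN_eq_zero_of_isBanded hA (i := y) (j := y + (j₀ - i₀)) (by simpa using hfar)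
    omega
  refine ⟨(y - 1).toNat, by simp; omega, j₀ - i₀, by simp; omega, ?_⟩
  rwa [show ((y - 1).toNat : ℤ) + 1 = y by omega]

end

/-- If `B ≺ A` in `Θ±(n)` then `‖B‖ < ‖A‖`. -/
theorem normA_lt_of_prec (n : ℕ) (hn : 2 ≤ n) (A B : ℤ → ℤ → ℕ)
    (hA : A ∈ ThetaPM n) (hB : B ∈ ThetaPM n) (h : precRel B A) :
    normA n B < normA n A := by
  obtain ⟨D, hAD, hBD⟩ : ∃ D, IsBanded A D ∧ IsBanded B D := by
    obtain ⟨DA, hDA⟩ := exists_isBanded (by omega) hA.1 fun i => (hA.2.2 i).1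
    obtain ⟨DB, hDB⟩ := exists_isBanded (by omega) hB.1 fun i => (hB.2.2 i).1
    exact ⟨max DA DB, hDA.mono (le_max_left _ _), hDB.mono (le_max_right _ _)⟩
  rw [normA_eq_sum_sigmaijN hA.1 hAD, normA_eq_sum_sigmaijN hB.1 hBD]
  have hle (i : ℕ) : ∀ j ∈ (Icc (-D : ℤ) D).erase 0,
      sigmaijN B (i + 1) (i + 1 + j) ≤ sigmaijN A (i + 1) (i + 1 + j) :=
    fun j hj => h.1 _ _ (by have := ne_of_mem_erase hj; omega)
  obtain ⟨i, hi, j, hj, hlt⟩ := exists_sigmaijN_lt_of_precRel (by omega) hA.1 hB.1 hAD h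
  exact sum_lt_sum (fun i _ => sum_le_sum (hle i)) ⟨i, hi, sum_lt_sum (hle i) ⟨j, hj, hlt⟩⟩
end

section
/- Let n ≥ 2 and A ∈ Θ±(n). The set { B ∈ Θ±(n) : B ≺ A } is finite, where B ≺ A means σ_{i,j}(B) ≤ σ_{i,j}(A) for all i ≠ j, with strict inequality for at least one pair (i, j). -/
lemma le_finsum_mem_of_mem {α : Type*} {f : α → ℕ} {s : Set α} {a : α}
    (hs : (s ∩ Function.support f).Finite) (ha : a ∈ s) : f a ≤ ∑ᶠ x ∈ s, f x := by
  rw [finsum_mem_def]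
  simpa [Set.indicator_of_mem ha] using
    single_le_finsum a (show (Function.support (s.indicator f)).Finite by
      rwa [Set.support_indicator]) fun _ => Nat.zero_le _

def HasBandwidth (A : ℤ → ℤ → ℕ) (W : ℕ) : Prop :=
  ∀ i j, A i j ≠ 0 → (j - i).natAbs ≤ W

namespace HasBandwidth

variable {A : ℤ → ℤ → ℕ} {W : ℕ}

lemma finite_inter_support (hA : HasBandwidth A W) {s : Set (ℤ × ℤ)} {a b : ℤ}
    (hs : ∀ p ∈ s, A p.1 p.2 ≠ 0 → p.1 ∈ Set.Icc a b) :
    (s ∩ Function.support fun p : ℤ × ℤ => A p.1 p.2).Finite := by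
  refine ((Set.finite_Icc a b).prod (Set.finite_Icc (a - W) (b + W))).subset ?_
  rintro ⟨x, y⟩ ⟨hp, hne⟩
  have hxy := hA x y hne
  have := hs _ hp hne
  simp only [Set.mem_Icc, Set.mem_prod] at this ⊢
  omega

lemma sigmaijN_eq_zero (hA : HasBandwidth A W) {i j : ℤ} (h : W < (j - i).natAbs) :
    sigmaijN A i j = 0 := by
  unfold sigmaijN
  split_ifs <;>
  · refine finsum_mem_of_eqOn_zero fun p hp => ?_
    by_contra hne
    have := hA p.1 p.2 hne
    simp only [Set.mem_ofPred_eq] at hp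
    omega

lemma apply_le_sigmaijN (hA : HasBandwidth A W) (i j : ℤ) :
    A i j ≤ sigmaijN A i j := by
  unfold sigmaijN
  split_ifs <;>
  · refine le_finsum_mem_of_mem (f := fun p : ℤ × ℤ => A p.1 p.2) (a := (i, j))
      (hA.finite_inter_support (a := min i j - W) (b := max i j + W) fun p hp hne => ?_)
      ⟨le_rfl, le_rfl⟩
    have := hA p.1 p.2 hne
    simp only [Set.mem_ofPred_eq, Set.mem_Icc] at hp ⊢
    omega

end HasBandwidth

noncomputable def window (n W : ℕ) : Finset (ℤ × ℤ) :=
  Finset.Ico (0 : ℤ) n ×ˢ Finset.Icc (-(W : ℤ)) (n + W)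

namespace ThetaPM

variable {n : ℕ} {A B : ℤ → ℤ → ℕ}

lemma apply_eq_apply_emod (hA : A ∈ ThetaPM n) (i j : ℤ) :
    A i j = A (i % n) (j - n * (i / n)) := by
  have hper : Function.Periodic (fun d => A (i % n + d) (j - n * (i / n) + d)) n :=
    fun d => by simpa only [add_assoc] using hA.1 (i % n + d) (j - n * (i / n) + d)
  have := hper.int_mul (i / n) 0
  simp only [zero_add, add_zero, Int.cast_id] at this
  rw [← this, mul_comm (i / n : ℤ), Int.emod_add_mul_ediv, sub_add_cancel]

lemma exists_hasBandwidth (hn : 0 < n) (hA : A ∈ ThetaPM n) : ∃ W, HasBandwidth A W := by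
  obtain ⟨W, hW⟩ : BddAbove (⋃ r ∈ Set.Ico (0 : ℤ) n,
      (fun j => (j - r).natAbs) '' {j | A r j ≠ 0}) :=
    (Set.finite_Ico _ _).bddAbove_biUnion.2 fun r _ => ((hA.2.2 r).1.image _).bddAbove
  refine ⟨W, fun i j hij => ?_⟩
  rw [apply_eq_apply_emod hA] at hij
  have hi := Int.emod_add_mul_ediv i n
  have h0 := Int.emod_nonneg i (Int.natCast_pos.2 hn).ne'
  have h1 := Int.emod_lt_of_pos i (Int.natCast_pos.2 hn)
  have := hW (Set.mem_biUnion (x := i % n) ⟨h0, h1⟩ ⟨_, hij, rfl⟩)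
  simp only at this
  generalize n * (i / n) = q at *
  omega

lemma eq_of_eqOn_window (hn : 0 < n) (hA : A ∈ ThetaPM n) (hB : B ∈ ThetaPM n) {W : ℕ}
    (hAW : HasBandwidth A W) (hBW : HasBandwidth B W)
    (h : ∀ p ∈ window n W, A p.1 p.2 = B p.1 p.2) : A = B := by
  funext i j
  rw [apply_eq_apply_emod hA, apply_eq_apply_emod hB]
  have hi := Int.emod_add_mul_ediv i n
  have h0 := Int.emod_nonneg i (Int.natCast_pos.2 hn).ne'
  have h1 := Int.emod_lt_of_pos i (Int.natCast_pos.2 hn)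
  generalize n * (i / n) = q at *
  by_cases hw : (j - q - i % n).natAbs ≤ W
  · refine h (_, _) ?_
    simp only [window, Finset.mem_product, Finset.mem_Ico, Finset.mem_Icc]
    omega
  · rw [of_not_not (mt (hAW _ _) hw), of_not_not (mt (hBW _ _) hw)]

lemma finite_setOf_hasBandwidth_of_le (hn : 0 < n) (W M : ℕ) :
    {B | B ∈ ThetaPM n ∧ HasBandwidth B W ∧ ∀ p ∈ window n W, B p.1 p.2 ≤ M}.Finite := by
  refine Set.Finite.of_finite_image (f := fun B (p : window n W) => B p.1.1 p.1.2) ?_ ?_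
  · refine (Set.Finite.pi' fun _ => Set.finite_Iic M).subset ?_
    rintro _ ⟨B, ⟨-, -, hM⟩, rfl⟩ p
    exact hM p p.2
  · rintro A ⟨hA, hAW, -⟩ B ⟨hB, hBW, -⟩ h
    exact eq_of_eqOn_window hn hA hB hAW hBW fun p hp => congrFun h ⟨p, hp⟩

end ThetaPM

/-- For every `A ∈ Θ±(n)`, the set `{B ∈ Θ±(n) : B ≺ A}` is finite. -/
theorem prec_set_finite (n : ℕ) (hn : 2 ≤ n) (A : ℤ → ℤ → ℕ) (hA : A ∈ ThetaPM n) :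
    {B : ℤ → ℤ → ℕ | B ∈ ThetaPM n ∧ precRel B A}.Finite := by
  have hn0 : 0 < n := by omega
  obtain ⟨W, hAW⟩ := ThetaPM.exists_hasBandwidth hn0 hA
  refine (ThetaPM.finite_setOf_hasBandwidth_of_le hn0 W
    ((window n W).sup fun p => sigmaijN A p.1 p.2)).subset ?_
  rintro B ⟨hB, hBA, -⟩
  obtain ⟨V, hBV⟩ := ThetaPM.exists_hasBandwidth hn0 hB
  have hle (i j : ℤ) (hij : i ≠ j) : B i j ≤ sigmaijN A i j :=
    (hBV.apply_le_sigmaijN i j).trans (hBA i j hij)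
  refine ⟨hB, fun i j hne => ?_, fun p hp => ?_⟩
  · by_contra hw
    have hij : i ≠ j := by rintro rfl; simp at hw
    exact hne (Nat.le_zero.1 (hAW.sigmaijN_eq_zero (not_le.1 hw) ▸ hle i j hij))
  · by_cases hp' : p.1 = p.2
    · simp [hp', hB.2.1]
    · exact (hle _ _ hp').trans (Finset.le_sup (f := fun p => sigmaijN A p.1 p.2) hp)
end
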